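/- Let m be a positive integer, S ≥ 0, and let x₁, …, x_m ≥ 0 satisfy Σ_{j=1}^m x_j ≤ S. Then Σ_{j=1}^m H_b(Q(√(x_j))) ≥ m·H_b(Q(√(S/m))). -/

import Mathlib

/-!
Write `φ` for the standard normal density and `t = √x`. The derivative of `x ↦ H_b(Q(√x))` is
`-φ(t) log((1 - Q)/Q) / (2 t log 2)`, so convexity on `[0, ∞)` amounts to the decrease of
`t ↦ φ(t) log((1 - Q)/Q) / t`, i.e. to `t φ / (Q (1 - Q)) ≤ (1 + t²) log((1 - Q)/Q)`.
Both sides vanish at `0`, and comparing derivatives reduces this to `φ (1 - 2Q) ≤ 2 t Q (1 - Q)`.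
For `t ≤ 9/10` this follows from `Q ≥ 1/2 - φ(0) t` and a Taylor bound on `φ`; for larger `t`
from the Mills-ratio bound `Q ≥ t φ / (1 + t²)`. Jensen's inequality at the mean of the `xⱼ`,
which is at most `S/m`, and the decrease of `x ↦ H_b(Q(√x))` then give the claim.
-/

open MeasureTheory

/-- The standard normal tail function `Q(t) = ∫ₜ^∞ (1/√(2π)) e^{-u²/2} du`. -/
noncomputable def Qfun (t : ℝ) : ℝ :=
  ∫ u in Set.Ioi t, (Real.sqrt (2 * Real.pi))⁻¹ * Real.exp (-(u ^ 2) / 2)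

/-- The binary entropy function `H_b(p) = -p log₂ p - (1-p) log₂ (1-p)`. -/
noncomputable def binEnt (p : ℝ) : ℝ :=
  -(p * Real.logb 2 p) - (1 - p) * Real.logb 2 (1 - p)

open Real Set Filter Topology ProbabilityTheory

local notation "φ" => gaussianPDFReal 0 1

lemma gaussianPDFReal_zero_one_eq (x : ℝ) : φ x = φ 0 * exp (-x ^ 2 / 2) := by
  simp [gaussianPDFReal]

lemma gaussianPDFReal_zero_one_neg (x : ℝ) : φ (-x) = φ x := by
  simp [gaussianPDFReal]

lemma gaussianPDFReal_zero_one_zero_sq : φ 0 ^ 2 = (2 * π)⁻¹ := by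
  simp only [gaussianPDFReal, NNReal.coe_one, mul_one, sub_zero, zero_pow two_ne_zero, neg_zero,
    zero_div, exp_zero, inv_pow, sq_sqrt (by positivity : (0 : ℝ) ≤ 2 * π)]

lemma continuous_gaussianPDFReal_zero_one : Continuous φ := by
  rw [gaussianPDFReal_def]; fun_prop

lemma hasDerivAt_gaussianPDFReal_zero_one (x : ℝ) : HasDerivAt φ (-x * φ x) x := by
  have h : HasDerivAt (fun y : ℝ => -y ^ 2 / 2) (-x) x := by
    simpa [neg_div] using ((hasDerivAt_pow 2 x).neg.div_const 2)
  have h' := h.exp.const_mul (φ 0)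
  rw [← funext gaussianPDFReal_zero_one_eq] at h'
  exact h'.congr_deriv (by rw [gaussianPDFReal_zero_one_eq x]; ring)

lemma gaussianPDFReal_zero_one_le (x : ℝ) : φ x ≤ φ 0 := by
  rw [gaussianPDFReal_zero_one_eq x]
  refine mul_le_of_le_one_right (gaussianPDFReal_nonneg 0 1 0) (exp_le_one_iff.2 ?_)
  nlinarith [sq_nonneg x]

lemma tendsto_gaussianPDFReal_zero_one_atTop : Tendsto φ atTop (𝓝 0) := by
  have h : Tendsto (fun x : ℝ => -x ^ 2 / 2) atTop atBot :=
    (tendsto_neg_atBot_iff.2 (tendsto_pow_atTop two_ne_zero)).atBot_div_const two_pos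
  have h' := (tendsto_exp_atBot.comp h).const_mul (φ 0)
  rw [mul_zero] at h'
  exact h'.congr fun x => (gaussianPDFReal_zero_one_eq x).symm

lemma Qfun_eq_setIntegral (t : ℝ) : Qfun t = ∫ u in Ioi t, φ u := by
  simp [Qfun, gaussianPDFReal]

lemma Qfun_sub_Qfun (a b : ℝ) : Qfun a - Qfun b = ∫ u in a..b, φ u := by
  simp only [Qfun_eq_setIntegral]
  exact intervalIntegral.integral_Ioi_sub_Ioi' (integrable_gaussianPDFReal 0 1).integrableOn
    (integrable_gaussianPDFReal 0 1).integrableOn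

lemma Qfun_add_Qfun_neg (t : ℝ) : Qfun t + Qfun (-t) = 1 := by
  have h := integral_comp_neg_Iic t φ
  simp only [gaussianPDFReal_zero_one_neg] at h
  rw [Qfun_eq_setIntegral, Qfun_eq_setIntegral, ← h, add_comm,
    intervalIntegral.integral_Iic_add_Ioi (integrable_gaussianPDFReal 0 1).integrableOn
      (integrable_gaussianPDFReal 0 1).integrableOn,
    integral_gaussianPDFReal_eq_one 0 one_ne_zero]

lemma Qfun_zero : Qfun 0 = 1 / 2 := by
  have h := Qfun_add_Qfun_neg 0
  rw [neg_zero] at h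
  linarith

lemma hasDerivAt_Qfun (t : ℝ) : HasDerivAt Qfun (-φ t) t := by
  have h : HasDerivAt (fun s => Qfun 0 - ∫ u in (0 : ℝ)..s, φ u) (-φ t) t := by
    simpa using (intervalIntegral.integral_hasDerivAt_right
      (integrable_gaussianPDFReal 0 1).intervalIntegrable
      (continuous_gaussianPDFReal_zero_one.stronglyMeasurableAtFilter _ _)
      continuous_gaussianPDFReal_zero_one.continuousAt).const_sub (Qfun 0)
  exact h.congr_of_eventuallyEq (Eventually.of_forall fun s => by
    simp only [← Qfun_sub_Qfun]; ring)

lemma continuous_Qfun : Continuous Qfun :=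
  continuous_iff_continuousAt.2 fun t => (hasDerivAt_Qfun t).continuousAt

lemma Qfun_strictAnti : StrictAnti Qfun :=
  strictAnti_of_hasDerivAt_neg hasDerivAt_Qfun fun t =>
    neg_lt_zero.2 (gaussianPDFReal_pos 0 1 t one_ne_zero)

lemma Qfun_nonneg (t : ℝ) : 0 ≤ Qfun t := by
  rw [Qfun_eq_setIntegral]
  exact setIntegral_nonneg measurableSet_Ioi fun u _ => gaussianPDFReal_nonneg 0 1 u

lemma Qfun_pos (t : ℝ) : 0 < Qfun t :=
  (Qfun_nonneg (t + 1)).trans_lt (Qfun_strictAnti (lt_add_one t))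

lemma Qfun_lt_one (t : ℝ) : Qfun t < 1 := by
  linarith [Qfun_add_Qfun_neg t, Qfun_pos (-t)]

lemma Qfun_le_half {t : ℝ} (ht : 0 ≤ t) : Qfun t ≤ 1 / 2 :=
  Qfun_zero ▸ Qfun_strictAnti.antitone ht

lemma tendsto_Qfun_atTop : Tendsto Qfun atTop (𝓝 0) := by
  have h := intervalIntegral_tendsto_integral_Ioi 0
    (integrable_gaussianPDFReal 0 1).integrableOn tendsto_id
  rw [← Qfun_eq_setIntegral] at h
  simpa [← Qfun_sub_Qfun] using h.const_sub (Qfun 0)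

lemma half_sub_le_Qfun {t : ℝ} (ht : 0 ≤ t) : 1 / 2 - φ 0 * t ≤ Qfun t := by
  have h : ∫ u in (0 : ℝ)..t, φ u ≤ ∫ _ in (0 : ℝ)..t, φ 0 :=
    intervalIntegral.integral_mono_on ht (integrable_gaussianPDFReal 0 1).intervalIntegrable
      intervalIntegrable_const fun u _ => gaussianPDFReal_zero_one_le u
  rw [← Qfun_sub_Qfun, Qfun_zero, intervalIntegral.integral_const, smul_eq_mul] at h
  linarith

lemma mul_gaussianPDFReal_div_le_Qfun (t : ℝ) : t * φ t / (1 + t ^ 2) ≤ Qfun t := by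
  set D := fun v => Qfun v - v * φ v / (1 + v ^ 2)
  have hD : ∀ v, HasDerivAt D (-(2 * φ v / (1 + v ^ 2) ^ 2)) v := by
    intro v
    have hden : HasDerivAt (fun v : ℝ => 1 + v ^ 2) (2 * v) v := by
      simpa using (hasDerivAt_pow 2 v).const_add 1
    refine ((hasDerivAt_Qfun v).sub (((hasDerivAt_id' v).mul
      (hasDerivAt_gaussianPDFReal_zero_one v)).div hden (by positivity))).congr_deriv ?_
    simp only [Pi.mul_apply]
    field_simp
    ring
  have hanti : Antitone D := antitone_of_hasDerivAt_nonpos hD fun v => by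
    have := gaussianPDFReal_nonneg 0 1 v
    simp only [Pi.zero_apply, neg_nonpos]
    positivity
  have hratio : Tendsto (fun v => v * φ v / (1 + v ^ 2)) atTop (𝓝 0) := by
    refine tendsto_of_tendsto_of_tendsto_of_le_of_le' tendsto_const_nhds
      tendsto_gaussianPDFReal_zero_one_atTop ?_ ?_ <;>
      filter_upwards [eventually_ge_atTop 0] with v hv <;>
      have := gaussianPDFReal_nonneg 0 1 v
    · positivity
    · rw [div_le_iff₀ (by positivity)]
      nlinarith [sq_nonneg (v - 1)]
  have hD0 : Tendsto D atTop (𝓝 0) := by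
    simpa using tendsto_Qfun_atTop.sub hratio
  linarith [hanti.le_of_tendsto hD0 t]

lemma gaussianPDFReal_mul_one_sub_two_mul_Qfun_le_of_le {t : ℝ} (ht0 : 0 ≤ t)
    (ht : t ≤ 9 / 10) :
    φ t * (1 - 2 * Qfun t) ≤ 2 * t * (Qfun t * (1 - Qfun t)) := by
  set c := φ 0
  have hc : 0 < c := gaussianPDFReal_pos 0 1 0 one_ne_zero
  have hc2 : c ^ 2 ≤ 1 / 6 := by
    rw [gaussianPDFReal_zero_one_zero_sq, inv_le_comm₀ (by positivity) (by norm_num)]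
    linarith [pi_gt_three]
  have hε : 1 / 2 - Qfun t ≤ c * t := by linarith [half_sub_le_Qfun ht0]
  have hε0 : 0 ≤ 1 / 2 - Qfun t := by linarith [Qfun_le_half ht0]
  have hφ : φ t ≤ c * (3 / 2 - t ^ 2) := by
    have hexp := quadratic_le_exp_of_nonneg (x := t ^ 2 / 2) (by positivity)
    have hφc : φ t * exp (t ^ 2 / 2) = c := by
      rw [gaussianPDFReal_zero_one_eq t, mul_assoc, ← exp_add, neg_div, neg_add_cancel, exp_zero,
        mul_one]
    have ht2 : t ^ 2 ≤ 81 / 100 := by nlinarith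
    have hφ0 := gaussianPDFReal_nonneg 0 1 t
    have hP : φ t * (1 + t ^ 2 / 2 + (t ^ 2 / 2) ^ 2 / 2) ≤ c :=
      hφc ▸ mul_le_mul_of_nonneg_left hexp hφ0
    have hpoly : 1 ≤ (3 / 2 - t ^ 2) * (1 + t ^ 2 / 2 + (t ^ 2 / 2) ^ 2 / 2) := by
      nlinarith [sq_nonneg t, mul_nonneg (sq_nonneg t) (sq_nonneg t)]
    nlinarith [mul_le_mul_of_nonneg_right hP (by linarith : (0 : ℝ) ≤ 3 / 2 - t ^ 2),
      mul_le_mul_of_nonneg_left hpoly hφ0]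
  set ε := 1 / 2 - Qfun t
  have hQ : Qfun t = 1 / 2 - ε := by ring
  rw [hQ]
  nlinarith [mul_le_mul hφ hε hε0 (by nlinarith), mul_le_mul hε hε hε0 (by positivity),
    mul_nonneg ht0 (sq_nonneg t)]

lemma one_sub_pow_four_le_two_mul_gaussianPDFReal {t : ℝ} (ht : 9 / 10 ≤ t) :
    1 - t ^ 4 ≤ 2 * t * φ t := by
  have hφ0 := gaussianPDFReal_nonneg 0 1 t
  rcases le_total 1 t with h1 | h1
  · nlinarith [one_le_pow₀ (n := 4) h1]
  set c := φ 0
  have hc : 0 < c := gaussianPDFReal_pos 0 1 0 one_ne_zero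
  have hc2 : 3 / 20 ≤ c ^ 2 := by
    rw [gaussianPDFReal_zero_one_zero_sq, le_inv_comm₀ (by norm_num) (by positivity)]
    linarith [pi_lt_d2]
  have hφ : c * (1 - t ^ 2 / 2) ≤ φ t := by
    rw [gaussianPDFReal_zero_one_eq t, neg_div]
    exact mul_le_mul_of_nonneg_left (one_sub_le_exp_neg _) hc.le
  have hc' : 77 / 200 ≤ c := by nlinarith
  have ht2 : t ^ 2 ≤ 1 := by nlinarith
  have ht4 : 6561 / 10000 ≤ t ^ 4 := by nlinarith [pow_le_pow_left₀ (by norm_num) ht 4]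
  nlinarith

lemma gaussianPDFReal_mul_one_sub_two_mul_Qfun_le_of_ge {t : ℝ} (ht : 9 / 10 ≤ t) :
    φ t * (1 - 2 * Qfun t) ≤ 2 * t * (Qfun t * (1 - Qfun t)) := by
  have hg := gaussianPDFReal_pos 0 1 t one_ne_zero
  have hq := Qfun_le_half (by linarith : (0 : ℝ) ≤ t)
  set g := φ t
  set q := Qfun t
  set q₀ := t * g / (1 + t ^ 2) with hq₀
  have hq₀q : q₀ ≤ q := mul_gaussianPDFReal_div_le_Qfun t
  -- at the Mills lower bound `q₀` the inequality is `1 - t⁴ ≤ 2 t φ t` in disguise ...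
  have hM₀ : g * (1 - 2 * q₀) ≤ 2 * t * (q₀ * (1 - q₀)) := by
    have hden : (0 : ℝ) < (1 + t ^ 2) ^ 2 := by positivity
    have key : (2 * t * (q₀ * (1 - q₀)) - g * (1 - 2 * q₀)) * (1 + t ^ 2) ^ 2
        = g * (t ^ 4 - 1 + 2 * t * g) := by
      rw [hq₀]; field_simp; ring
    nlinarith [one_sub_pow_four_le_two_mul_gaussianPDFReal ht]
  -- ... and `q ↦ 2 t q (1 - q) - g (1 - 2 q)` increases on `q ≤ 1/2`, while `q₀ ≤ q`.
  nlinarith [mul_nonneg (sub_nonneg.2 hq₀q) (by nlinarith : 0 ≤ 2 * t * (1 - q - q₀) + 2 * g)]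

lemma gaussianPDFReal_mul_one_sub_two_mul_Qfun_le {t : ℝ} (ht : 0 ≤ t) :
    φ t * (1 - 2 * Qfun t) ≤ 2 * t * (Qfun t * (1 - Qfun t)) := by
  rcases le_total t (9 / 10) with h | h
  · exact gaussianPDFReal_mul_one_sub_two_mul_Qfun_le_of_le ht h
  · exact gaussianPDFReal_mul_one_sub_two_mul_Qfun_le_of_ge h

noncomputable def tailLogOdds (t : ℝ) : ℝ := log (1 - Qfun t) - log (Qfun t)

lemma Qfun_mul_one_sub_pos (t : ℝ) : 0 < Qfun t * (1 - Qfun t) :=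
  mul_pos (Qfun_pos t) (sub_pos.2 (Qfun_lt_one t))

lemma hasDerivAt_tailLogOdds (t : ℝ) :
    HasDerivAt tailLogOdds (φ t / (Qfun t * (1 - Qfun t))) t := by
  have hQ := hasDerivAt_Qfun t
  refine ((((hasDerivAt_const t 1).sub hQ).log (sub_pos.2 (Qfun_lt_one t)).ne').sub
    (hQ.log (Qfun_pos t).ne')).congr_deriv ?_
  have := (Qfun_pos t).ne'
  have := (sub_pos.2 (Qfun_lt_one t)).ne'
  simp only [Pi.sub_apply]
  field_simp
  ring

lemma tailLogOdds_nonneg {t : ℝ} (ht : 0 ≤ t) : 0 ≤ tailLogOdds t := by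
  have h := Qfun_le_half ht
  exact sub_nonneg.2 (log_le_log (Qfun_pos t) (by linarith))

lemma mul_gaussianPDFReal_div_le_one_add_sq_mul_tailLogOdds {t : ℝ} (ht : 0 ≤ t) :
    t * φ t / (Qfun t * (1 - Qfun t)) ≤ (1 + t ^ 2) * tailLogOdds t := by
  set L := fun s => (1 + s ^ 2) * tailLogOdds s - s * φ s / (Qfun s * (1 - Qfun s))
  have hL : ∀ s, HasDerivAt L (2 * s * tailLogOdds s + s * φ s *
      (2 * s * (Qfun s * (1 - Qfun s)) - φ s * (1 - 2 * Qfun s)) /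
        (Qfun s * (1 - Qfun s)) ^ 2) s := by
    intro s
    have hsq : HasDerivAt (fun s : ℝ => 1 + s ^ 2) (2 * s) s := by
      simpa using (hasDerivAt_pow 2 s).const_add 1
    have hden : HasDerivAt (fun s => Qfun s * (1 - Qfun s))
        (-φ s * (1 - Qfun s) + Qfun s * φ s) s :=
      (hasDerivAt_Qfun s).mul (((hasDerivAt_const s 1).sub (hasDerivAt_Qfun s)).congr_deriv
        (by ring))
    refine ((hsq.mul (hasDerivAt_tailLogOdds s)).sub (((hasDerivAt_id' s).mul
      (hasDerivAt_gaussianPDFReal_zero_one s)).div hden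
        (Qfun_mul_one_sub_pos s).ne')).congr_deriv ?_
    have := (Qfun_pos s).ne'
    have := (sub_pos.2 (Qfun_lt_one s)).ne'
    simp only [Pi.mul_apply]
    field_simp
    ring
  have hmono : MonotoneOn L (Ici 0) := by
    refine monotoneOn_of_hasDerivWithinAt_nonneg (convex_Ici 0)
      (fun s _ => (hL s).continuousAt.continuousWithinAt) (fun s _ => (hL s).hasDerivWithinAt) ?_
    rw [interior_Ici]
    intro s (hs : 0 < s)
    have := tailLogOdds_nonneg hs.le
    have := gaussianPDFReal_nonneg 0 1 s
    have := sub_nonneg.2 (gaussianPDFReal_mul_one_sub_two_mul_Qfun_le hs.le)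
    positivity
  have hL0 : L 0 = 0 := by norm_num [L, tailLogOdds, Qfun_zero]
  have := hmono self_mem_Ici ht ht
  simp only [hL0, L] at this
  linarith

lemma antitoneOn_gaussianPDFReal_mul_tailLogOdds_div :
    AntitoneOn (fun t => φ t * tailLogOdds t / t) (Ioi 0) := by
  have hg : ∀ t ≠ 0, HasDerivAt (fun t => φ t * tailLogOdds t / t) (-(φ t *
      ((1 + t ^ 2) * tailLogOdds t - t * φ t / (Qfun t * (1 - Qfun t)))) / t ^ 2) t := by
    intro t ht
    refine (((hasDerivAt_gaussianPDFReal_zero_one t).mul (hasDerivAt_tailLogOdds t)).div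
      (hasDerivAt_id' t) ht).congr_deriv ?_
    have := (Qfun_mul_one_sub_pos t).ne'
    simp only [Pi.mul_apply]
    field_simp
    ring
  refine antitoneOn_of_hasDerivWithinAt_nonpos (convex_Ioi 0)
    (fun t ht => (hg t (ne_of_gt ht)).continuousAt.continuousWithinAt)
    (fun t ht => (hg t (ne_of_gt (interior_subset ht))).hasDerivWithinAt) ?_
  intro t ht
  rw [interior_Ioi] at ht
  have := sub_nonneg.2 (mul_gaussianPDFReal_div_le_one_add_sq_mul_tailLogOdds (le_of_lt ht))
  have := gaussianPDFReal_nonneg 0 1 t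
  rw [neg_div, neg_nonpos]
  positivity

lemma hasDerivAt_binEntropy_Qfun_sqrt {x : ℝ} (hx : 0 < x) :
    HasDerivAt (fun y => binEntropy (Qfun √y))
      (-(φ √x * tailLogOdds √x / √x) / 2) x := by
  have h := ((hasDerivAt_binEntropy (Qfun_pos _).ne' (Qfun_lt_one _).ne).comp _
    (hasDerivAt_Qfun √x)).comp x (hasDerivAt_sqrt hx.ne')
  refine h.congr_deriv ?_
  have := (sqrt_pos.2 hx).ne'
  simp only [tailLogOdds]
  field_simp

lemma convexOn_binEntropy_Qfun_sqrt : ConvexOn ℝ (Ici 0) fun x => binEntropy (Qfun √x) := by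
  refine MonotoneOn.convexOn_of_deriv (convex_Ici 0) ?_ ?_ ?_
  · exact (binEntropy_continuous.comp (continuous_Qfun.comp continuous_sqrt)).continuousOn
  · rw [interior_Ici]
    exact fun x hx => (hasDerivAt_binEntropy_Qfun_sqrt hx).differentiableAt.differentiableWithinAt
  · rw [interior_Ici]
    intro x (hx : 0 < x) y (hy : 0 < y) hxy
    rw [(hasDerivAt_binEntropy_Qfun_sqrt hx).deriv, (hasDerivAt_binEntropy_Qfun_sqrt hy).deriv]
    have := antitoneOn_gaussianPDFReal_mul_tailLogOdds_div (sqrt_pos.2 hx) (sqrt_pos.2 hy)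
      (sqrt_le_sqrt hxy)
    linarith

lemma antitone_binEntropy_Qfun_sqrt : Antitone fun x => binEntropy (Qfun √x) := by
  intro x y hxy
  have mem : ∀ z, Qfun √z ∈ Icc 0 2⁻¹ := fun z =>
    ⟨Qfun_nonneg _, by simpa using Qfun_le_half (sqrt_nonneg z)⟩
  exact binEntropy_strictMonoOn.monotoneOn (mem y) (mem x)
    (Qfun_strictAnti.antitone (sqrt_le_sqrt hxy))

lemma binEnt_eq_binEntropy_div (p : ℝ) : binEnt p = binEntropy p / log 2 := by
  simp only [binEnt, binEntropy, log_inv, logb]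
  ring

theorem sum_binEnt_Qfun_ge_general (m : ℕ) (S : ℝ)
    (x : Fin m → ℝ) (hx : ∀ j, 0 ≤ x j) (hsum : ∑ j, x j ≤ S) :
    (m : ℝ) * binEnt (Qfun (Real.sqrt (S / m))) ≤
      ∑ j, binEnt (Qfun (Real.sqrt (x j))) := by
  rcases m.eq_zero_or_pos with rfl | hm
  · simp
  have hm' : (0 : ℝ) < m := by exact_mod_cast hm
  set f := fun y => binEntropy (Qfun √y)
  have hjensen : f (∑ j, (m : ℝ)⁻¹ • x j) ≤ ∑ j, (m : ℝ)⁻¹ • f (x j) :=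
    convexOn_binEntropy_Qfun_sqrt.map_sum_le (fun _ _ => by positivity)
      (by simp [hm'.ne']) (fun j _ => hx j)
  have hmono : f (S / m) ≤ f (∑ j, (m : ℝ)⁻¹ • x j) := by
    refine antitone_binEntropy_Qfun_sqrt ?_
    rw [← Finset.smul_sum, smul_eq_mul, inv_mul_eq_div]
    exact div_le_div_of_nonneg_right hsum hm'.le
  calc (m : ℝ) * binEnt (Qfun √(S / m)) = m * f (S / m) / log 2 := by
        rw [binEnt_eq_binEntropy_div, mul_div_assoc]
    _ ≤ m * (∑ j, (m : ℝ)⁻¹ • f (x j)) / log 2 := by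
        gcongr
        exact hmono.trans hjensen
    _ = ∑ j, binEnt (Qfun √(x j)) := by
        rw [← Finset.smul_sum, smul_eq_mul, ← mul_assoc, mul_inv_cancel₀ hm'.ne', one_mul,
          Finset.sum_div]
        simp only [f, binEnt_eq_binEntropy_div]

/-- If `x₁, …, x_m ≥ 0` with `Σ xⱼ ≤ S`, then
`Σⱼ H_b(Q(√(xⱼ))) ≥ m·H_b(Q(√(S/m)))`. -/
theorem sum_binEnt_Qfun_ge (m : ℕ) (hm : 0 < m) (S : ℝ) (hS : 0 ≤ S)
    (x : Fin m → ℝ) (hx : ∀ j, 0 ≤ x j) (hsum : ∑ j, x j ≤ S) :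
    (m : ℝ) * binEnt (Qfun (Real.sqrt (S / m))) ≤
      ∑ j, binEnt (Qfun (Real.sqrt (x j))) :=
  sum_binEnt_Qfun_ge_general m S x hx hsum
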